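/- Let G be a graph with a star coloring φ using k colors, and suppose there is a constant c_k such that every hypergraph of maximum degree less than k has a strong odd vertex coloring with c_k colors. Then G has a strong odd coloring with at most c_k · k colors. -/

import Mathlib

/-!
The neighbours of `v` of colour `c` under the star colouring `φ` are the leaves of a
two-coloured star centred at `v`. Only those with at least two leaves are kept as hyperedges:
singletons meet every colour class in `0` or `1` vertices anyway. A vertex `u` lies in the leaf
set of at most one star per centre colour `≠ φ u`, because two centres of the same colour
adjacent to `u`, together with a second leaf, would form a bicoloured path on four vertices.
So the hypergraph has maximum degree `< k`, and pairing `φ` with a strong odd colouring `ψ` of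
it gives the required colouring: its colour class `(a, c)` in the neighbourhood of `v` is the
`ψ`-class `a` of the leaf set at `v` of colour `c`.
-/

open Finset

attribute [local instance] Classical.propDecidable

/-- A proper vertex-coloring of a graph. -/
def IsProperColoring {V : Type*} (G : SimpleGraph V) {α : Type*} (φ : V → α) : Prop :=
  ∀ u v : V, G.Adj u v → φ u ≠ φ v

/-- The number of neighbors of `v` in `G` having color `c` under `φ`. -/
noncomputable def colorCount {V : Type*} [Fintype V] (G : SimpleGraph V) {α : Type*}
    (φ : V → α) (v : V) (c : α) : ℕ :=
  (Finset.univ.filter (fun u => G.Adj v u ∧ φ u = c)).card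

/-- A star coloring: a proper coloring in which every path on four vertices receives at
least three colors (equivalently, the union of any two color classes induces a star
forest). -/
def IsStarColoring {V : Type*} (G : SimpleGraph V) {k : ℕ} (φ : V → Fin k) : Prop :=
  IsProperColoring G φ ∧
  ∀ a b c d : V, G.Adj a b → G.Adj b c → G.Adj c d →
    a ≠ c → b ≠ d → a ≠ d → ¬(φ a = φ c ∧ φ b = φ d)

theorem IsProperColoring.of_comp {V α β : Type*} {G : SimpleGraph V} {g : V → β} (f : β → α)
    (h : IsProperColoring G (f ∘ g)) : IsProperColoring G g :=
  fun u v huv hg => h u v huv (congrArg f hg)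

def IsStrongOddColoring {U β : Type*} [DecidableEq β] (E : Finset (Finset U)) (ψ : U → β) :
    Prop :=
  ∀ e ∈ E, ∀ b : β, (e.filter fun u => ψ u = b).card = 0 ∨ Odd (e.filter fun u => ψ u = b).card

section ColorNbhd

variable {V α β : Type*} [Fintype V] (G : SimpleGraph V)

noncomputable def colorNbhd (φ : V → α) (v : V) (c : α) : Finset V :=
  univ.filter fun u => G.Adj v u ∧ φ u = c

theorem mem_colorNbhd {φ : V → α} {v u : V} {c : α} :
    u ∈ colorNbhd G φ v c ↔ G.Adj v u ∧ φ u = c := by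
  simp [colorNbhd]

noncomputable def starLeafSets [Fintype α] (φ : V → α) : Finset (Finset V) :=
  (univ.image fun p : V × α => colorNbhd G φ p.1 p.2).filter fun e => 2 ≤ e.card

theorem mem_starLeafSets [Fintype α] {φ : V → α} {e : Finset V} :
    e ∈ starLeafSets G φ ↔ (∃ v c, colorNbhd G φ v c = e) ∧ 2 ≤ e.card := by
  simp [starLeafSets]

theorem colorCount_pair [DecidableEq β] (ψ : V → β) (φ : V → α) (v : V) (b : β) (c : α) :
    colorCount G (fun u => (ψ u, φ u)) v (b, c) =
      ((colorNbhd G φ v c).filter fun u => ψ u = b).card := by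
  unfold colorCount colorNbhd
  congr 1
  ext u
  simp only [mem_filter, mem_univ, true_and, Prod.mk.injEq]
  tauto

theorem colorCount_comp_injective {f : β → α} (hf : Function.Injective f) (g : V → β)
    (v : V) (b : β) : colorCount G (f ∘ g) v (f b) = colorCount G g v b := by
  simp only [colorCount, Function.comp_apply, hf.eq_iff]

theorem IsStrongOddColoring.card_filter_colorNbhd_eq_zero_or_odd [Fintype α] [DecidableEq β]
    {φ : V → α} {ψ : V → β}
    (hψ : IsStrongOddColoring (starLeafSets G φ) ψ) (v : V) (c : α) (b : β) :
    ((colorNbhd G φ v c).filter fun u => ψ u = b).card = 0 ∨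
      Odd ((colorNbhd G φ v c).filter fun u => ψ u = b).card := by
  by_cases hcard : 2 ≤ (colorNbhd G φ v c).card
  · exact hψ _ ((mem_starLeafSets G).2 ⟨⟨v, c, rfl⟩, hcard⟩) b
  · have h1 : ((colorNbhd G φ v c).filter fun u => ψ u = b).card ≤ 1 :=
      (card_filter_le _ _).trans (by omega)
    rcases Nat.le_one_iff_eq_zero_or_eq_one.1 h1 with h | h
    · exact Or.inl h
    · exact Or.inr (h ▸ odd_one)

end ColorNbhd

namespace IsStarColoring

variable {V : Type*} [Fintype V] {G : SimpleGraph V} {k : ℕ} {φ : V → Fin k}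

/-- Otherwise `u' v u v'`, for a second leaf `u'`, would be a bicoloured path. -/
theorem eq_of_mem_colorNbhd (hφ : IsStarColoring G φ) {u v v' : V} {c : Fin k}
    (hcard : 2 ≤ (colorNbhd G φ v c).card) (hu : u ∈ colorNbhd G φ v c) (hv' : G.Adj v' u)
    (hcol : φ v' = φ v) : v' = v := by
  obtain ⟨u', hu', hu'u⟩ := exists_mem_ne hcard u
  rw [mem_colorNbhd] at hu hu'
  by_contra hne
  have hu'v' : u' ≠ v' := by
    rintro rfl
    exact hφ.1 v u hu.1 (by rw [← hcol, hu'.2, hu.2])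
  exact hφ.2 u' v u v' hu'.1.symm hu.1 hv'.symm hu'u (Ne.symm hne) hu'v'
    ⟨hu'.2.trans hu.2.symm, hcol.symm⟩

theorem card_starLeafSets_filter_mem_lt (hφ : IsStarColoring G φ) (u : V) :
    ((starLeafSets G φ).filter fun e => u ∈ e).card < k := by
  set centres := univ.filter fun v => G.Adj v u ∧ 2 ≤ (colorNbhd G φ v (φ u)).card
  have hsub : (starLeafSets G φ).filter (fun e => u ∈ e) ⊆
      centres.image fun v => colorNbhd G φ v (φ u) := by
    intro e he
    obtain ⟨⟨⟨v, c, rfl⟩, hcard⟩, hu⟩ := mem_filter.1 he |>.imp_left (mem_starLeafSets G).1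
    obtain ⟨hvu, rfl⟩ := (mem_colorNbhd G).1 hu
    exact mem_image.2 ⟨v, mem_filter.2 ⟨mem_univ v, hvu, hcard⟩, rfl⟩
  have hcentres : centres.card ≤ (univ.erase (φ u)).card := by
    refine card_le_card_of_injOn φ (fun v hv => ?_) (fun v hv v' hv' hcol => ?_)
    · exact mem_erase.2 ⟨hφ.1 v u (mem_filter.1 hv).2.1, mem_univ _⟩
    · obtain ⟨-, hv'u, hcard⟩ := mem_filter.1 hv'
      exact hφ.eq_of_mem_colorNbhd hcard ((mem_colorNbhd G).2 ⟨hv'u, rfl⟩)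
        (mem_filter.1 hv).2.1 hcol
  calc _ ≤ (centres.image fun v => colorNbhd G φ v (φ u)).card := card_le_card hsub
    _ ≤ centres.card := card_image_le
    _ ≤ (univ.erase (φ u)).card := hcentres
    _ < (univ : Finset (Fin k)).card := card_erase_lt_of_mem (mem_univ _)
    _ = k := card_fin k

end IsStarColoring

/-- If `G` has a star coloring with `k` colors, and every hypergraph of maximum degree
less than `k` admits a strong odd vertex coloring with `ck` colors (every hyperedge meets
every color class in zero or an odd number of vertices), then `G` has a strong odd
coloring with at most `ck * k` colors. -/
theorem strong_odd_from_star_coloring {V : Type} [Fintype V] (G : SimpleGraph V)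
    (k ck : ℕ) (φ : V → Fin k) (hφ : IsStarColoring G φ)
    (hyp : ∀ (U : Type) [Fintype U] (E : Finset (Finset U)),
      (∀ u : U, (E.filter (fun e => u ∈ e)).card < k) →
      ∃ ψ : U → Fin ck, ∀ e ∈ E, ∀ col : Fin ck,
        ((e.filter (fun u => ψ u = col)).card = 0 ∨
          Odd ((e.filter (fun u => ψ u = col)).card))) :
    ∃ g : V → Fin (ck * k),
      IsProperColoring G g ∧
      ∀ (v : V) (col : Fin (ck * k)),
        colorCount G g v col = 0 ∨ Odd (colorCount G g v col) := by
  obtain ⟨ψ, hψ⟩ := hyp V (starLeafSets G φ) hφ.card_starLeafSets_filter_mem_lt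
  refine ⟨finProdFinEquiv ∘ fun v => (ψ v, φ v), ?_, fun v col => ?_⟩
  · refine IsProperColoring.of_comp (Prod.snd ∘ finProdFinEquiv.symm) ?_
    simpa only [Function.comp_def, Equiv.symm_apply_apply] using hφ.1
  · obtain ⟨⟨a, c⟩, rfl⟩ := finProdFinEquiv.surjective col
    rw [colorCount_comp_injective G finProdFinEquiv.injective, colorCount_pair]
    exact IsStrongOddColoring.card_filter_colorNbhd_eq_zero_or_odd G hψ v c a
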